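/- arXiv:1707.09918 — 2 statements merged into one kernel-verified Lean document; each statement's English description precedes it below -/
import Mathlib

section
/- For every integer ℓ ≥ 1, B_{ℓ,0}(x) = (f_ee(x)+f_en(x))·f_en(x)^{ℓ−1}·(f_nn(x)+f_en(x)), and for every integer r ≥ 1, B_{0,r}(x) = (f_nn(x)+f_en(x))·f_en(x)^{r−1}·(f_ee(x)+f_en(x)). -/
/-!
Lattice paths with unit East (`true`) and unit North (`false`) steps,
bounces with respect to the line `y = (β/α)·x`, and the associated
generating functions over `ℚ`.
-/

/-- A lattice path is a list of unit steps: `true` = East, `false` = North. -/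
abbrev LatticePath := List Bool

/-- `p` is a lattice path from `(0,0)` to `(α*k, β*k)`, i.e. a member of `L_{β/α}(k)`. -/
def InL (α β k : ℕ) (p : LatticePath) : Prop :=
  p.count true = α * k ∧ p.count false = β * k

/-- `p` has a left bounce at step index `i`: step `i` is an E-step, step `i+1` is an
N-step, and their common endpoint (the point reached after `i+1` steps) lies on the
line `y = (β/α)·x`, i.e. `α·y = β·x`. -/
def IsLeftBounce (α β : ℕ) (p : LatticePath) (i : ℕ) : Prop :=
  p[i]? = some true ∧ p[i + 1]? = some false ∧
    α * ((p.take (i + 1)).count false) = β * ((p.take (i + 1)).count true)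

/-- `p` has a right bounce at step index `i`: step `i` is an N-step, step `i+1` is an
E-step, and their common endpoint lies on the line `y = (β/α)·x`. -/
def IsRightBounce (α β : ℕ) (p : LatticePath) (i : ℕ) : Prop :=
  p[i]? = some false ∧ p[i + 1]? = some true ∧
    α * ((p.take (i + 1)).count false) = β * ((p.take (i + 1)).count true)

/-- The number of left bounces of `p` with respect to the line `y = (β/α)·x`. -/
noncomputable def leftBounces (α β : ℕ) (p : LatticePath) : ℕ :=
  {i | IsLeftBounce α β p i}.ncard

/-- The number of right bounces of `p` with respect to the line `y = (β/α)·x`. -/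
noncomputable def rightBounces (α β : ℕ) (p : LatticePath) : ℕ :=
  {i | IsRightBounce α β p i}.ncard

/-- `p` is bounce-free: it has no left and no right bounces. -/
def BounceFree (α β : ℕ) (p : LatticePath) : Prop :=
  (∀ i, ¬ IsLeftBounce α β p i) ∧ (∀ i, ¬ IsRightBounce α β p i)

/-- The first step of `p` is `a`. -/
def FirstStep (p : LatticePath) (a : Bool) : Prop := p.head? = some a

/-- The last step of `p` is `b`. -/
def LastStep (p : LatticePath) (b : Bool) : Prop := p.getLast? = some b

/-- The generating function `Σ_{k≥1} |S k|·xᵏ ∈ ℚ[[x]]` of a family of path sets. -/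
noncomputable def gfOf (S : ℕ → Set LatticePath) : PowerSeries ℚ :=
  PowerSeries.mk fun k => if k = 0 then 0 else ((S k).ncard : ℚ)

/-- `g(x) = Σ_{k≥1} C((α+β)k, αk)·xᵏ`, counting all paths in `L_{β/α}(k)`. -/
noncomputable def gSer (α β : ℕ) : PowerSeries ℚ :=
  PowerSeries.mk fun k => if k = 0 then 0 else ((((α + β) * k).choose (α * k) : ℕ) : ℚ)

/-- `g_ee(x) = Σ_{k≥1} C((α+β)k−2, αk−2)·xᵏ`, counting EE-paths in `L_{β/α}(k)`.
We write the lower index as `βk = ((α+β)k−2) − (αk−2)`, which equals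
`C((α+β)k−2, αk−2)` by the symmetry of binomial coefficients and correctly
implements the convention `C(n, −1) = 0` (needed when `αk = 1`), which ℕ-truncated
subtraction would not. -/
noncomputable def geeSer (α β : ℕ) : PowerSeries ℚ :=
  PowerSeries.mk fun k => if k = 0 then 0 else ((((α + β) * k - 2).choose (β * k) : ℕ) : ℚ)

/-- `g_en(x) = Σ_{k≥1} C((α+β)k−2, αk−1)·xᵏ`, counting EN-paths in `L_{β/α}(k)`. -/
noncomputable def genSer (α β : ℕ) : PowerSeries ℚ :=
  PowerSeries.mk fun k => if k = 0 then 0 else ((((α + β) * k - 2).choose (α * k - 1) : ℕ) : ℚ)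

/-- `g_nn(x) = Σ_{k≥1} C((α+β)k−2, αk)·xᵏ`, counting NN-paths in `L_{β/α}(k)`. -/
noncomputable def gnnSer (α β : ℕ) : PowerSeries ℚ :=
  PowerSeries.mk fun k => if k = 0 then 0 else ((((α + β) * k - 2).choose (α * k) : ℕ) : ℚ)

/-- `f_ee(x)`: generating function of bounce-free EE-paths in `L_{β/α}(k)`. -/
noncomputable def feeSer (α β : ℕ) : PowerSeries ℚ :=
  gfOf fun k => {p | InL α β k p ∧ BounceFree α β p ∧ FirstStep p true ∧ LastStep p true}

/-- `f_en(x)`: generating function of bounce-free EN-paths in `L_{β/α}(k)`. -/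
noncomputable def fenSer (α β : ℕ) : PowerSeries ℚ :=
  gfOf fun k => {p | InL α β k p ∧ BounceFree α β p ∧ FirstStep p true ∧ LastStep p false}

/-- `f_nn(x)`: generating function of bounce-free NN-paths in `L_{β/α}(k)`. -/
noncomputable def fnnSer (α β : ℕ) : PowerSeries ℚ :=
  gfOf fun k => {p | InL α β k p ∧ BounceFree α β p ∧ FirstStep p false ∧ LastStep p false}

/-- `f(x)`: generating function of all bounce-free paths in `L_{β/α}(k)`. -/
noncomputable def fSer (α β : ℕ) : PowerSeries ℚ :=
  gfOf fun k => {p | InL α β k p ∧ BounceFree α β p}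

/-- `B_{ℓ,r}(x)`: generating function of paths in `L_{β/α}(k)` with exactly `ℓ`
left bounces and exactly `r` right bounces. -/
noncomputable def BSer (α β ℓ r : ℕ) : PowerSeries ℚ :=
  gfOf fun k => {p | InL α β k p ∧ leftBounces α β p = ℓ ∧ rightBounces α β p = r}

/-- The Fuss–Catalan generating function `c_α(x) = Σ_{k≥0} 1/(αk+1)·C((α+1)k, k)·xᵏ`. -/
noncomputable def fussCatalan (α : ℕ) : PowerSeries ℚ :=
  PowerSeries.mk fun k => (1 / ((α * k + 1 : ℕ) : ℚ)) * ((((α + 1) * k).choose k : ℕ) : ℚ)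

/-- For slope `1/α`: `p` has a horizontal cross at the lattice point `(α*i, i)` (`i ≥ 1`):
`p` passes through `(α*i, i)` (so the prefix of length `(α+1)*i` has exactly `α*i`
E-steps), and both the step ending there and the step starting there are E-steps. -/
def HasHCrossAt (α : ℕ) (p : LatticePath) (i : ℕ) : Prop :=
  1 ≤ i ∧ (p.take ((α + 1) * i)).count true = α * i ∧
    p[(α + 1) * i - 1]? = some true ∧ p[(α + 1) * i]? = some true

/-- `p` has no horizontal crosses with respect to the line `y = x/α`. -/
def NoHCross (α : ℕ) (p : LatticePath) : Prop := ∀ i, ¬ HasHCrossAt α p i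

/-!
Cut a path with `ℓ + 1` left bounces and no right bounce at its first left bounce. Since `α` and
`β` are coprime, the lattice point there is `(αm, βm)` for some `m`, so the path splits into a
bounce-free path of `L_{β/α}(m)` ending with an E-step, followed by a path starting with an N-step
that has `ℓ` left bounces and no right bounce; gluing inverts the cut. Hence
`B_{ℓ+1,0} = (f_ee + f_ne) · T_ℓ`, where `T_ℓ` counts the second kind of path, and cutting those
again gives `T_{ℓ+1} = f_ne · T_ℓ` and `T_0 = f_nn + f_ne`. Reversing a path keeps it on the line,
swaps its first and last steps and exchanges left and right bounces: this gives `f_ne = f_en` and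
`B_{0,r} = B_{r,0}`.
-/

open Finset.HasAntidiagonal Function

/-- Left bounces are `IsBounce α β true`, right bounces `IsBounce α β false`, definitionally. -/
def IsBounce (α β : ℕ) (a : Bool) (p : LatticePath) (i : ℕ) : Prop :=
  p[i]? = some a ∧ p[i + 1]? = some (!a) ∧
    α * ((p.take (i + 1)).count false) = β * ((p.take (i + 1)).count true)

lemma Nat.Coprime.add_pos {α β : ℕ} (h : Nat.Coprime α β) : 0 < α + β := by
  by_contra h0
  obtain ⟨rfl, rfl⟩ : α = 0 ∧ β = 0 := by omega
  simp at h

lemma Nat.Coprime.exists_eq_mul_of_mul_eq_mul {α β e n : ℕ} (h : Nat.Coprime α β)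
    (he : α * n = β * e) : ∃ m, e = α * m ∧ n = β * m := by
  rcases Nat.eq_zero_or_pos α with rfl | hα
  · obtain rfl : β = 1 := (Nat.coprime_zero_left β).1 h
    exact ⟨n, by simpa using he.symm, by simp⟩
  · obtain ⟨m, rfl⟩ := h.dvd_of_dvd_mul_left ⟨n, he.symm⟩
    refine ⟨m, rfl, Nat.eq_of_mul_eq_mul_left hα ?_⟩
    rw [he]; ring

section Paths
variable {α β i j k : ℕ} {p q r : LatticePath}

lemma InL.length_eq (hp : InL α β k p) : p.length = (α + β) * k := by
  rw [← List.count_true_add_count_false, hp.1, hp.2, add_mul]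

lemma InL.eq_of_inL (hcop : Nat.Coprime α β) (hi : InL α β i p) (hj : InL α β j p) : i = j :=
  Nat.eq_of_mul_eq_mul_left hcop.add_pos (hi.length_eq.symm.trans hj.length_eq)

lemma InL.eq_nil (hp : InL α β 0 p) : p = [] := by
  simpa using hp.length_eq

lemma InL.append (hq : InL α β i q) (hr : InL α β j r) : InL α β (i + j) (q ++ r) := by
  constructor <;> simp only [List.count_append, hq.1, hq.2, hr.1, hr.2, mul_add]

lemma InL.of_append_left (hp : InL α β (i + j) (q ++ r)) (hq : InL α β i q) :
    InL α β j r := by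
  have h1 := hp.1
  have h2 := hp.2
  rw [List.count_append, hq.1, mul_add] at h1
  rw [List.count_append, hq.2, mul_add] at h2
  exact ⟨by omega, by omega⟩

lemma inL_reverse_iff : InL α β k p.reverse ↔ InL α β k p := by
  rw [InL, InL, List.count_reverse, List.count_reverse]

lemma InL.reverse (hp : InL α β k p) : InL α β k p.reverse :=
  inL_reverse_iff.2 hp

lemma InL.mul_count_false (hp : InL α β k p) : α * p.count false = β * p.count true := by
  rw [hp.1, hp.2, mul_left_comm]

lemma finite_setOf_inL (α β k : ℕ) : {p : LatticePath | InL α β k p}.Finite :=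
  (List.finite_length_eq Bool ((α + β) * k)).subset fun _ hp => InL.length_eq hp

lemma IsBounce.add_one_lt_length {a : Bool} (h : IsBounce α β a p i) : i + 1 < p.length := by
  by_contra hi
  have h2 := h.2.1
  rw [List.getElem?_eq_none (by omega)] at h2
  cases h2

lemma finite_setOf_isBounce (α β : ℕ) (a : Bool) (p : LatticePath) :
    {i | IsBounce α β a p i}.Finite :=
  (Set.finite_Iio p.length).subset fun _ hi => by
    have := IsBounce.add_one_lt_length hi
    simp only [Set.mem_Iio]; omega

lemma leftBounces_eq_zero_iff : leftBounces α β p = 0 ↔ ∀ t, ¬ IsLeftBounce α β p t := by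
  rw [leftBounces,
    Set.ncard_eq_zero (s := {t | IsLeftBounce α β p t}) (finite_setOf_isBounce α β true p)]
  exact Set.eq_empty_iff_forall_notMem

lemma rightBounces_eq_zero_iff : rightBounces α β p = 0 ↔ ∀ t, ¬ IsRightBounce α β p t := by
  rw [rightBounces,
    Set.ncard_eq_zero (s := {t | IsRightBounce α β p t}) (finite_setOf_isBounce α β false p)]
  exact Set.eq_empty_iff_forall_notMem

lemma bounceFree_iff : BounceFree α β p ↔ leftBounces α β p = 0 ∧ rightBounces α β p = 0 := by
  rw [leftBounces_eq_zero_iff, rightBounces_eq_zero_iff, BounceFree]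

lemma LastStep.ne_nil {b : Bool} (h : LastStep q b) : q ≠ [] := by
  rintro rfl; simp [LastStep] at h

lemma FirstStep.ne_nil {b : Bool} (h : FirstStep q b) : q ≠ [] := by
  rintro rfl; simp [FirstStep] at h

lemma FirstStep.eq {a b : Bool} (ha : FirstStep p a) (hb : FirstStep p b) : a = b :=
  Option.some.inj (ha.symm.trans hb)

lemma LastStep.eq {a b : Bool} (ha : LastStep p a) (hb : LastStep p b) : a = b :=
  Option.some.inj (ha.symm.trans hb)

end Paths

section Append
variable {α β m : ℕ} {q r : LatticePath} {a : Bool} {t : ℕ}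

lemma BounceFree.not_isBounce (h : BounceFree α β q) (a : Bool) (t : ℕ) :
    ¬ IsBounce α β a q t := by
  cases a
  exacts [h.2 t, h.1 t]

lemma isBounce_append_of_lt (ht : t + 1 < q.length) :
    IsBounce α β a (q ++ r) t ↔ IsBounce α β a q t := by
  rw [IsBounce, IsBounce, List.getElem?_append_left (by omega), List.getElem?_append_left ht,
    List.take_append_of_le_length ht.le]

lemma isBounce_append_length_add (hq : InL α β m q) :
    IsBounce α β a (q ++ r) (q.length + t) ↔ IsBounce α β a r t := by
  rw [IsBounce, IsBounce, add_assoc, List.getElem?_append_right (by omega),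
    List.getElem?_append_right (by omega), List.take_length_add_append, List.count_append,
    List.count_append, hq.1, hq.2, Nat.add_sub_cancel_left, Nat.add_sub_cancel_left, mul_add,
    mul_add, mul_left_comm α β m, add_right_inj]

lemma isBounce_append_length_sub_one (hq : InL α β m q) (hlast : LastStep q a)
    (hfirst : FirstStep r (!a)) : IsBounce α β a (q ++ r) (q.length - 1) := by
  have hpos : 0 < q.length := List.length_pos_iff.2 hlast.ne_nil
  rw [IsBounce, Nat.sub_add_cancel hpos, List.getElem?_append_left (by omega),
    List.getElem?_append_right le_rfl, Nat.sub_self, List.take_left, hq.1, hq.2,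
    mul_left_comm α β m, ← List.getLast?_eq_getElem?, ← List.head?_eq_getElem?]
  exact ⟨hlast, hfirst, rfl⟩

lemma isBounce_append_iff (hq : InL α β m q) (hbf : BounceFree α β q) :
    IsBounce α β a (q ++ r) t ↔
      (t = q.length - 1 ∧ LastStep q a ∧ FirstStep r (!a)) ∨
        ∃ j, IsBounce α β a r j ∧ j + q.length = t := by
  constructor
  · intro ht
    rcases lt_trichotomy (t + 1) q.length with hlt | heq | hgt
    · exact absurd ((isBounce_append_of_lt hlt).1 ht) (hbf.not_isBounce a t)
    · left
      obtain ⟨h0, h1, -⟩ := ht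
      rw [List.getElem?_append_left (by omega)] at h0
      rw [heq, List.getElem?_append_right le_rfl, Nat.sub_self] at h1
      refine ⟨by omega, ?_, ?_⟩
      · rwa [LastStep, List.getLast?_eq_getElem?, show q.length - 1 = t by omega]
      · rwa [FirstStep, List.head?_eq_getElem?]
    · right
      obtain ⟨j, rfl⟩ : ∃ j, t = q.length + j := ⟨t - q.length, by omega⟩
      exact ⟨j, (isBounce_append_length_add hq).1 ht, add_comm _ _⟩
  · rintro (⟨rfl, hlast, hfirst⟩ | ⟨j, hj, rfl⟩)
    · exact isBounce_append_length_sub_one hq hlast hfirst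
    · rw [add_comm]; exact (isBounce_append_length_add hq).2 hj

lemma setOf_isLeftBounce_append (hq : InL α β m q) (hbf : BounceFree α β q)
    (hlast : LastStep q true) (hfirst : FirstStep r false) :
    {t | IsLeftBounce α β (q ++ r) t} =
      insert (q.length - 1) ((· + q.length) '' {j | IsLeftBounce α β r j}) := by
  ext t
  exact (isBounce_append_iff hq hbf).trans (by simp [hlast, hfirst, IsLeftBounce, IsBounce])

lemma setOf_isRightBounce_append (hq : InL α β m q) (hbf : BounceFree α β q)
    (hlast : LastStep q true) :
    {t | IsRightBounce α β (q ++ r) t} = (· + q.length) '' {j | IsRightBounce α β r j} := by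
  ext t
  have : ¬ LastStep q false := fun h => Bool.noConfusion (hlast.eq h)
  exact (isBounce_append_iff hq hbf).trans (by simp [this, IsRightBounce, IsBounce])

lemma leftBounces_append (hq : InL α β m q) (hbf : BounceFree α β q)
    (hlast : LastStep q true) (hfirst : FirstStep r false) :
    leftBounces α β (q ++ r) = leftBounces α β r + 1 := by
  have hpos : 0 < q.length := List.length_pos_iff.2 hlast.ne_nil
  rw [leftBounces, setOf_isLeftBounce_append hq hbf hlast hfirst,
    Set.ncard_insert_of_notMem (s := (· + q.length) '' {j | IsLeftBounce α β r j}) ?_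
      ((finite_setOf_isBounce α β true r).image _),
    Set.ncard_image_of_injective _ (add_left_injective _), leftBounces]
  rintro ⟨j, -, hj⟩
  dsimp only at hj
  omega

lemma rightBounces_append (hq : InL α β m q) (hbf : BounceFree α β q)
    (hlast : LastStep q true) :
    rightBounces α β (q ++ r) = rightBounces α β r := by
  rw [rightBounces, setOf_isRightBounce_append hq hbf hlast,
    Set.ncard_image_of_injective _ (add_left_injective _), rightBounces]

lemma sInf_setOf_isLeftBounce_append (hq : InL α β m q) (hbf : BounceFree α β q)
    (hlast : LastStep q true) (hfirst : FirstStep r false) :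
    sInf {t | IsLeftBounce α β (q ++ r) t} = q.length - 1 := by
  rw [setOf_isLeftBounce_append hq hbf hlast hfirst]
  refine le_antisymm (Nat.sInf_le (Set.mem_insert _ _)) (le_csInf ⟨_, Set.mem_insert _ _⟩ ?_)
  rintro _ (rfl | ⟨j, -, rfl⟩)
  · exact le_rfl
  · dsimp only; omega

end Append

section Cut
variable {α β k ℓ : ℕ} {p : LatticePath}

lemma exists_append_of_leftBounces_eq_succ (hcop : Nat.Coprime α β) (hp : InL α β k p)
    (hl : leftBounces α β p = ℓ + 1) (hr : rightBounces α β p = 0) :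
    ∃ i j q r, i + j = k ∧ q ++ r = p ∧ InL α β i q ∧ BounceFree α β q ∧ LastStep q true ∧
      InL α β j r ∧ FirstStep r false := by
  have hne : {t | IsLeftBounce α β p t}.Nonempty :=
    Set.nonempty_of_ncard_ne_zero (by rw [← leftBounces, hl]; omega)
  set t₀ := sInf {t | IsLeftBounce α β p t}
  have ht₀ : IsLeftBounce α β p t₀ := Nat.sInf_mem hne
  have hlen := IsBounce.add_one_lt_length ht₀
  obtain ⟨i, hqE, hqN⟩ := hcop.exists_eq_mul_of_mul_eq_mul ht₀.2.2
  set q := p.take (t₀ + 1)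
  set r := p.drop (t₀ + 1)
  have hqr : q ++ r = p := List.take_append_drop _ _
  have hq : InL α β i q := ⟨hqE, hqN⟩
  have hqlen : q.length = t₀ + 1 := List.length_take_of_le hlen.le
  have hbf : BounceFree α β q := by
    refine ⟨fun t ht => ?_, fun t ht => ?_⟩
    · have hlt := IsBounce.add_one_lt_length ht
      have : IsLeftBounce α β p t := hqr ▸ (isBounce_append_of_lt hlt).2 ht
      have : t₀ ≤ t := Nat.sInf_le this
      omega
    · have hlt := IsBounce.add_one_lt_length ht
      exact rightBounces_eq_zero_iff.1 hr t (hqr ▸ (isBounce_append_of_lt hlt).2 ht)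
  have hik : i ≤ k := by
    refine Nat.le_of_mul_le_mul_left ?_ hcop.add_pos
    rw [← hq.length_eq, ← hp.length_eq]
    exact List.length_take_le' _ _
  obtain ⟨j, rfl⟩ := Nat.exists_eq_add_of_le hik
  have hlast : LastStep q true := by
    rw [LastStep, List.getLast?_eq_getElem?, hqlen, Nat.add_sub_cancel, List.getElem?_take_of_lt
      (Nat.lt_succ_self _)]
    exact ht₀.1
  have hfirst : FirstStep r false := by
    rw [FirstStep, List.head?_eq_getElem?, List.getElem?_drop, Nat.add_zero]
    exact ht₀.2.1
  exact ⟨i, j, q, r, rfl, hqr, hq, hbf, hlast, (hqr ▸ hp).of_append_left hq, hfirst⟩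

end Cut

lemma coeff_gfOf_of_zero_eq_empty {S : ℕ → Set LatticePath} (hS0 : S 0 = ∅) (k : ℕ) :
    PowerSeries.coeff k (gfOf S) = (S k).ncard := by
  rw [gfOf, PowerSeries.coeff_mk]
  split_ifs with hk
  · simp [hk, hS0]
  · rfl

lemma gfOf_union {S T : ℕ → Set LatticePath} (hd : ∀ k, Disjoint (S k) (T k))
    (hS : ∀ k, (S k).Finite) (hT : ∀ k, (T k).Finite) :
    gfOf (fun k => S k ∪ T k) = gfOf S + gfOf T := by
  ext k
  simp only [gfOf, map_add, PowerSeries.coeff_mk, Set.ncard_union_eq (hd k) (hS k) (hT k)]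
  split_ifs <;> push_cast <;> ring

lemma gfOf_eq_mul_of_injOn_append {S T U : ℕ → Set LatticePath} (hS0 : S 0 = ∅) (hT0 : T 0 = ∅)
    (hS : ∀ i, (S i).Finite) (hT : ∀ j, (T j).Finite) (hdisj : Pairwise (Disjoint on S))
    (hU : ∀ k, U k = (fun x => x.1 ++ x.2) '' ⋃ x ∈ antidiagonal k, S x.1 ×ˢ T x.2)
    (hinj : ∀ k, Set.InjOn (fun x => x.1 ++ x.2) (⋃ x ∈ antidiagonal k, S x.1 ×ˢ T x.2)) :
    gfOf U = gfOf S * gfOf T := by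
  have hU0 : U 0 = ∅ := by simp [hU, hS0]
  ext k
  have hprod : (↑(antidiagonal k) : Set (ℕ × ℕ)).PairwiseDisjoint (fun x => S x.1 ×ˢ T x.2) := by
    intro x hx y hy hxy
    refine Set.disjoint_prod.2 (Or.inl (hdisj fun h => hxy ?_))
    simp only [Finset.mem_coe, mem_antidiagonal] at hx hy
    ext <;> omega
  rw [coeff_gfOf_of_zero_eq_empty hU0, PowerSeries.coeff_mul, hU k, (hinj k).ncard_image,
    ← Finset.set_biUnion_coe,
    Set.Finite.ncard_biUnion (Finset.finite_toSet _) (fun x _ => (hS x.1).prod (hT x.2)) hprod,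
    finsum_mem_coe_finset]
  push_cast
  refine Finset.sum_congr rfl fun x _ => ?_
  rw [coeff_gfOf_of_zero_eq_empty hS0, coeff_gfOf_of_zero_eq_empty hT0, Set.ncard_prod,
    Nat.cast_mul]

section Factorization
variable {α β : ℕ}

/-- `H` constrains the first step: `fun _ => True` imposes nothing, `(· = some false)` asks for an
N-step. -/
def bounceFreeEndingE (α β : ℕ) (H : Option Bool → Prop) (m : ℕ) : Set LatticePath :=
  {q | InL α β m q ∧ BounceFree α β q ∧ LastStep q true ∧ H q.head?}

def leftBounceOnly (α β ℓ : ℕ) (H : Option Bool → Prop) (k : ℕ) : Set LatticePath :=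
  {p | InL α β k p ∧ leftBounces α β p = ℓ ∧ rightBounces α β p = 0 ∧ H p.head?}

lemma bounceFreeEndingE_zero (H : Option Bool → Prop) : bounceFreeEndingE α β H 0 = ∅ :=
  Set.eq_empty_of_forall_notMem fun _ hq => hq.2.2.1.ne_nil hq.1.eq_nil

lemma leftBounceOnly_zero (ℓ : ℕ) : leftBounceOnly α β ℓ (· = some false) 0 = ∅ :=
  Set.eq_empty_of_forall_notMem fun _ hp => FirstStep.ne_nil hp.2.2.2 hp.1.eq_nil

lemma mem_leftBounceOnly_append {H : Option Bool → Prop} {ℓ i j : ℕ} {q r : LatticePath}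
    (hq : q ∈ bounceFreeEndingE α β H i) (hr : r ∈ leftBounceOnly α β ℓ (· = some false) j) :
    q ++ r ∈ leftBounceOnly α β (ℓ + 1) H (i + j) := by
  obtain ⟨hqL, hbf, hlast, hH⟩ := hq
  obtain ⟨hrL, hl, hr, hfirst⟩ := hr
  refine ⟨hqL.append hrL, ?_, ?_, ?_⟩
  · rw [leftBounces_append hqL hbf hlast hfirst, hl]
  · rw [rightBounces_append hqL hbf hlast, hr]
  · rwa [List.head?_append_of_ne_nil _ hlast.ne_nil]

lemma gfOf_leftBounceOnly_succ (hcop : Nat.Coprime α β) (ℓ : ℕ) (H : Option Bool → Prop) :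
    gfOf (leftBounceOnly α β (ℓ + 1) H) =
      gfOf (bounceFreeEndingE α β H) * gfOf (leftBounceOnly α β ℓ (· = some false)) := by
  refine gfOf_eq_mul_of_injOn_append (bounceFreeEndingE_zero H) (leftBounceOnly_zero ℓ)
    (fun i => (finite_setOf_inL α β i).subset fun _ h => h.1)
    (fun j => (finite_setOf_inL α β j).subset fun _ h => h.1)
    (fun i i' hii' => Set.disjoint_left.2 fun _ h h' => hii' (h.1.eq_of_inL hcop h'.1))
    (fun k => ?_) (fun k => ?_)
  · ext p
    simp only [Set.mem_image, Set.mem_iUnion, Set.mem_prod, mem_antidiagonal, Prod.exists]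
    constructor
    · rintro ⟨hp, hl, hr, hH⟩
      obtain ⟨i, j, q, r, rfl, rfl, hq, hbf, hlast, hrL, hfirst⟩ :=
        exists_append_of_leftBounces_eq_succ hcop hp hl hr
      refine ⟨q, r, ⟨i, j, rfl, ⟨hq, hbf, hlast, ?_⟩, hrL, ?_, ?_, hfirst⟩, rfl⟩
      · rwa [List.head?_append_of_ne_nil _ hlast.ne_nil] at hH
      · rwa [leftBounces_append hq hbf hlast hfirst, Nat.add_right_cancel_iff] at hl
      · rwa [rightBounces_append hq hbf hlast] at hr
    · rintro ⟨q, r, ⟨i, j, rfl, hq, hr⟩, rfl⟩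
      exact mem_leftBounceOnly_append hq hr
  · rintro ⟨q₁, r₁⟩ h₁ ⟨q₂, r₂⟩ h₂ (he : q₁ ++ r₁ = q₂ ++ r₂)
    simp only [Set.mem_iUnion, Set.mem_prod, mem_antidiagonal, Prod.exists] at h₁ h₂
    obtain ⟨_, _, -, ⟨hq₁, hbf₁, hlast₁, -⟩, -, -, -, hfirst₁⟩ := h₁
    obtain ⟨_, _, -, ⟨hq₂, hbf₂, hlast₂, -⟩, -, -, -, hfirst₂⟩ := h₂
    have hlen := (sInf_setOf_isLeftBounce_append hq₁ hbf₁ hlast₁ hfirst₁).symm.trans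
      (he ▸ sInf_setOf_isLeftBounce_append hq₂ hbf₂ hlast₂ hfirst₂)
    have := List.length_pos_iff.2 hlast₁.ne_nil
    have := List.length_pos_iff.2 hlast₂.ne_nil
    obtain ⟨rfl, rfl⟩ := List.append_inj he (by omega)
    rfl

end Factorization

section Reverse
variable {α β k : ℕ} {p : LatticePath}

lemma IsBounce.reverse (hp : InL α β k p) {a : Bool} {i : ℕ} (hb : IsBounce α β a p i) :
    IsBounce α β (!a) p.reverse (p.length - 2 - i) := by
  have hi := hb.add_one_lt_length
  have hcount (b : Bool) : ((p.drop (i + 1)).reverse).count b =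
      p.count b - (p.take (i + 1)).count b := by
    rw [List.count_reverse, ← List.take_append_drop (i + 1) p, List.count_append,
      List.take_append_drop, Nat.add_sub_cancel_left]
  refine ⟨?_, ?_, ?_⟩
  · rw [List.getElem?_reverse (by omega), show p.length - 1 - (p.length - 2 - i) = i + 1 by omega]
    exact hb.2.1
  · rw [List.getElem?_reverse (by omega), show p.length - 1 - (p.length - 2 - i + 1) = i by omega,
      Bool.not_not]
    exact hb.1
  · rw [List.take_reverse, show p.length - (p.length - 2 - i + 1) = i + 1 by omega, hcount,
      hcount, Nat.mul_sub, Nat.mul_sub, hp.mul_count_false, hb.2.2]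

lemma setOf_isBounce_reverse (hp : InL α β k p) (a : Bool) :
    {i | IsBounce α β (!a) p.reverse i} = (p.length - 2 - ·) '' {i | IsBounce α β a p i} := by
  ext j
  constructor
  · intro hj
    have hlt := hj.add_one_lt_length
    have := hj.reverse hp.reverse
    simp only [List.reverse_reverse, Bool.not_not, List.length_reverse] at this hlt
    exact ⟨p.length - 2 - j, this, show p.length - 2 - (p.length - 2 - j) = j by omega⟩
  · rintro ⟨i, hi, rfl⟩
    exact hi.reverse hp

lemma ncard_setOf_isBounce_reverse (hp : InL α β k p) (a : Bool) :
    {i | IsBounce α β (!a) p.reverse i}.ncard = {i | IsBounce α β a p i}.ncard := by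
  rw [setOf_isBounce_reverse hp a]
  refine Set.InjOn.ncard_image fun i₁ h₁ i₂ h₂ he => ?_
  have := IsBounce.add_one_lt_length h₁
  have := IsBounce.add_one_lt_length h₂
  omega

lemma leftBounces_reverse (hp : InL α β k p) :
    leftBounces α β p.reverse = rightBounces α β p :=
  ncard_setOf_isBounce_reverse hp false

lemma rightBounces_reverse (hp : InL α β k p) :
    rightBounces α β p.reverse = leftBounces α β p :=
  ncard_setOf_isBounce_reverse hp true

lemma bounceFree_reverse_iff (hp : InL α β k p) :
    BounceFree α β p.reverse ↔ BounceFree α β p := by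
  rw [bounceFree_iff, bounceFree_iff, leftBounces_reverse hp, rightBounces_reverse hp, and_comm]

lemma gfOf_eq_of_mem_iff_reverse_mem {S T : ℕ → Set LatticePath}
    (h : ∀ k p, p ∈ S k ↔ p.reverse ∈ T k) : gfOf S = gfOf T := by
  have hS : S = fun k => List.reverse ⁻¹' T k := funext fun k => Set.ext (h k)
  simp only [hS, gfOf, Set.ncard_preimage_of_injective_subset_range List.reverse_injective
    (List.reverse_surjective.range_eq ▸ Set.subset_univ _)]

lemma BSer_comm (ℓ r : ℕ) : BSer α β ℓ r = BSer α β r ℓ := by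
  refine gfOf_eq_of_mem_iff_reverse_mem fun k p => ?_
  constructor
  · rintro ⟨hp, hl, hr⟩
    exact ⟨hp.reverse, (leftBounces_reverse hp).trans hr, (rightBounces_reverse hp).trans hl⟩
  · rintro ⟨hp, hl, hr⟩
    have hp' := inL_reverse_iff.1 hp
    exact ⟨hp', (rightBounces_reverse hp').symm.trans hr, (leftBounces_reverse hp').symm.trans hl⟩

lemma gfOf_bounceFree_NE :
    gfOf (fun k => {p | InL α β k p ∧ BounceFree α β p ∧ FirstStep p false ∧ LastStep p true}) =
      fenSer α β := by
  refine gfOf_eq_of_mem_iff_reverse_mem fun k p => ?_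
  simp only [Set.mem_ofPred_eq, FirstStep, LastStep, List.head?_reverse, List.getLast?_reverse]
  constructor
  · rintro ⟨hp, hbf, hfirst, hlast⟩
    exact ⟨hp.reverse, (bounceFree_reverse_iff hp).2 hbf, hlast, hfirst⟩
  · rintro ⟨hp, hbf, hfirst, hlast⟩
    have hp' := inL_reverse_iff.1 hp
    exact ⟨hp', (bounceFree_reverse_iff hp').1 hbf, hlast, hfirst⟩

end Reverse

section Series
variable {α β : ℕ}

lemma firstStep_true_or_false {q : LatticePath} (hq : q ≠ []) :
    FirstStep q true ∨ FirstStep q false := by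
  obtain ⟨a, l, rfl⟩ := List.exists_cons_of_ne_nil hq
  cases a <;> simp [FirstStep]

lemma lastStep_true_or_false {q : LatticePath} (hq : q ≠ []) :
    LastStep q true ∨ LastStep q false := by
  rw [LastStep, LastStep, List.getLast?_eq_some_getLast hq]
  cases q.getLast hq <;> simp

lemma BSer_eq_gfOf_leftBounceOnly (ℓ : ℕ) :
    BSer α β ℓ 0 = gfOf (leftBounceOnly α β ℓ fun _ => True) := by
  rw [BSer]
  congr
  ext k p
  simp [leftBounceOnly]

lemma gfOf_bounceFreeEndingE_true :
    gfOf (bounceFreeEndingE α β fun _ => True) = feeSer α β + fenSer α β := by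
  rw [feeSer, ← gfOf_bounceFree_NE, ← gfOf_union]
  · congr
    ext k q
    simp only [bounceFreeEndingE, and_true, Set.mem_union, Set.mem_ofPred_eq]
    constructor
    · rintro ⟨hq, hbf, hlast⟩
      rcases firstStep_true_or_false hlast.ne_nil with hfirst | hfirst
      exacts [Or.inl ⟨hq, hbf, hfirst, hlast⟩, Or.inr ⟨hq, hbf, hfirst, hlast⟩]
    · rintro (⟨hq, hbf, -, hlast⟩ | ⟨hq, hbf, -, hlast⟩) <;> exact ⟨hq, hbf, hlast⟩
  · exact fun k => Set.disjoint_left.2 fun _ h h' => Bool.noConfusion (h.2.2.1.eq h'.2.2.1)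
  all_goals exact fun k => (finite_setOf_inL α β k).subset fun _ h => h.1

lemma gfOf_bounceFreeEndingE_startingN :
    gfOf (bounceFreeEndingE α β (· = some false)) = fenSer α β := by
  rw [← gfOf_bounceFree_NE]
  congr
  ext k q
  simp only [bounceFreeEndingE, FirstStep, Set.mem_ofPred_eq]
  tauto

lemma gfOf_leftBounceOnly_zero_startingN :
    gfOf (leftBounceOnly α β 0 (· = some false)) = fnnSer α β + fenSer α β := by
  rw [fnnSer, ← gfOf_bounceFree_NE, ← gfOf_union]
  · congr
    ext k q
    simp only [leftBounceOnly, Set.mem_union, Set.mem_ofPred_eq, bounceFree_iff]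
    constructor
    · rintro ⟨hq, hl, hr, hfirst⟩
      rcases lastStep_true_or_false (FirstStep.ne_nil hfirst) with hlast | hlast
      exacts [Or.inr ⟨hq, ⟨hl, hr⟩, hfirst, hlast⟩, Or.inl ⟨hq, ⟨hl, hr⟩, hfirst, hlast⟩]
    · rintro (⟨hq, ⟨hl, hr⟩, hfirst, -⟩ | ⟨hq, ⟨hl, hr⟩, hfirst, -⟩) <;> exact ⟨hq, hl, hr, hfirst⟩
  · exact fun k => Set.disjoint_left.2 fun _ h h' => Bool.noConfusion (h.2.2.2.eq h'.2.2.2)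
  all_goals exact fun k => (finite_setOf_inL α β k).subset fun _ h => h.1

lemma gfOf_leftBounceOnly_startingN (hcop : Nat.Coprime α β) (ℓ : ℕ) :
    gfOf (leftBounceOnly α β ℓ (· = some false)) = fenSer α β ^ ℓ * (fnnSer α β + fenSer α β) := by
  induction ℓ with
  | zero => rw [pow_zero, one_mul, gfOf_leftBounceOnly_zero_startingN]
  | succ ℓ ih =>
    rw [gfOf_leftBounceOnly_succ hcop, gfOf_bounceFreeEndingE_startingN, ih, pow_succ', mul_assoc]

end Series

theorem statement5_general (α β : ℕ) (hcop : Nat.Coprime α β) :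
    (∀ ℓ : ℕ, 1 ≤ ℓ →
      BSer α β ℓ 0 = (feeSer α β + fenSer α β) * fenSer α β ^ (ℓ - 1) *
        (fnnSer α β + fenSer α β)) ∧
    (∀ r : ℕ, 1 ≤ r →
      BSer α β 0 r = (fnnSer α β + fenSer α β) * fenSer α β ^ (r - 1) *
        (feeSer α β + fenSer α β)) := by
  have hleft (ℓ : ℕ) (hℓ : 1 ≤ ℓ) : BSer α β ℓ 0 =
      (feeSer α β + fenSer α β) * fenSer α β ^ (ℓ - 1) * (fnnSer α β + fenSer α β) := by
    obtain ⟨ℓ, rfl⟩ := Nat.exists_eq_add_of_le' hℓ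
    rw [BSer_eq_gfOf_leftBounceOnly, gfOf_leftBounceOnly_succ hcop, gfOf_bounceFreeEndingE_true,
      gfOf_leftBounceOnly_startingN hcop, Nat.add_sub_cancel, mul_assoc]
  refine ⟨hleft, fun r hr => ?_⟩
  rw [BSer_comm, hleft r hr]
  ring

/-- For `ℓ ≥ 1`, `B_{ℓ,0} = (f_ee+f_en)·f_en^{ℓ−1}·(f_nn+f_en)`,
and for `r ≥ 1`, `B_{0,r} = (f_nn+f_en)·f_en^{r−1}·(f_ee+f_en)`. -/
theorem statement5 (α β : ℕ) (hα : 0 < α) (hβ : 0 < β) (hcop : Nat.Coprime α β) :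
    (∀ ℓ : ℕ, 1 ≤ ℓ →
      BSer α β ℓ 0 = (feeSer α β + fenSer α β) * fenSer α β ^ (ℓ - 1) *
        (fnnSer α β + fenSer α β)) ∧
    (∀ r : ℕ, 1 ≤ r →
      BSer α β 0 r = (fnnSer α β + fenSer α β) * fenSer α β ^ (r - 1) *
        (feeSer α β + fenSer α β)) :=
  statement5_general α β hcop
end

section
/- In the ring of formal power series in the three variables x, s, t over ℚ, with D = 1 + (2−s−t)·g_en(x) + (1−s)·(1−t)·(g_en(x)² − g_ee(x)·g_nn(x)), the series G_en(x,s,t) = Σ_{k≥1} Σ_{ℓ,r≥0} b^{en}_{ℓ,r}(k)·x^k·s^ℓ·t^r and G_ne(x,s,t) = Σ_{k≥1} Σ_{ℓ,r≥0} b^{ne}_{ℓ,r}(k)·x^k·s^ℓ·t^r satisfy G_en(x,s,t)·D = g_en(x) + (1−s)·(g_en(x)² − g_ee(x)·g_nn(x)) and G_ne(x,s,t)·D = g_en(x) + (1−t)·(g_en(x)² − g_ee(x)·g_nn(x)). -/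
/-- Embed a power series in `x` into `ℚ[[x,s,t]]`, where the variables
`0, 1, 2 : Fin 3` stand for `x, s, t` respectively. -/
noncomputable def toMv (φ : PowerSeries ℚ) : MvPowerSeries (Fin 3) ℚ := fun d =>
  if d 1 = 0 ∧ d 2 = 0 then PowerSeries.coeff (d 0) φ else 0

/-- The variable `s` of `ℚ[[x,s,t]]`. -/
noncomputable def sVar : MvPowerSeries (Fin 3) ℚ := MvPowerSeries.X 1

/-- The variable `t` of `ℚ[[x,s,t]]`. -/
noncomputable def tVar : MvPowerSeries (Fin 3) ℚ := MvPowerSeries.X 2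

/-- `G(x,s,t) = Σ_{k≥1} Σ_{ℓ,r≥0} b_{ℓ,r}(k)·xᵏsˡtʳ`, where `b_{ℓ,r}(k)` is the number
of paths in `L_{β/α}(k)` with exactly `ℓ` left and `r` right bounces. -/
noncomputable def G3 (α β : ℕ) : MvPowerSeries (Fin 3) ℚ := fun d =>
  if d 0 = 0 then 0 else
    (({p | InL α β (d 0) p ∧ leftBounces α β p = d 1 ∧
        rightBounces α β p = d 2}).ncard : ℚ)

/-- `G_ab(x,s,t) = Σ_{k≥1} Σ_{ℓ,r≥0} b^{ab}_{ℓ,r}(k)·xᵏsˡtʳ`, where `b^{ab}_{ℓ,r}(k)`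
is the number of AB-paths in `L_{β/α}(k)` with exactly `ℓ` left and `r` right
bounces. -/
noncomputable def G3ab (α β : ℕ) (a b : Bool) : MvPowerSeries (Fin 3) ℚ := fun d =>
  if d 0 = 0 then 0 else
    (({p | InL α β (d 0) p ∧ FirstStep p a ∧ LastStep p b ∧
        leftBounces α β p = d 1 ∧ rightBounces α β p = d 2}).ncard : ℚ)

/-- The denominator
`D = 1 + (2−s−t)·g_en(x) + (1−s)·(1−t)·(g_en(x)² − g_ee(x)·g_nn(x)) ∈ ℚ[[x,s,t]]`. -/
noncomputable def D3 (α β : ℕ) : MvPowerSeries (Fin 3) ℚ :=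
  1 + (2 - sVar - tVar) * toMv (genSer α β)
    + (1 - sVar) * (1 - tVar) *
        (toMv (genSer α β) ^ 2 - toMv (geeSer α β) * toMv (gnnSer α β))

/-!
A path in `L_{β/α}(k)` that has a bounce splits uniquely at its first bounce. Since `α` and `β`
are coprime, that bounce sits at a lattice point `(αj, βj)`, `1 ≤ j < k`; the part before it is a
bounce-free path of `L_{β/α}(j)` whose last step is the first step of the bounce, and the part
after it is any path of `L_{β/α}(k - j)` starting with the other kind of step, which has one bounce
of that type fewer than the whole path and as many of the other type. Collect the series into
`2 × 2` matrices indexed by first and last step: `F = (f_ab)` for bounce-free paths,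
`g = (g_ab)` for all paths and `𝔾 = (G_ab)`. The splitting reads `g = F + F J g` and
`𝔾 = F + F K 𝔾`, with `J`, `K` off-diagonal with entries `1, 1` and `s, t`. Since `1 - F K` is
invertible, eliminating `F` gives `𝔾 (1 + (J - K) g) = g`, and `D` is the determinant of
`1 + (J - K) g`, so Cramer's rule gives `G_en · D` and `G_ne · D`.
-/

lemma ncard_image2_append {γ : Type*} {A B : Set (List γ)} {n : ℕ}
    (hA : ∀ q ∈ A, q.length = n) : (Set.image2 (· ++ ·) A B).ncard = A.ncard * B.ncard := by
  rw [← Set.image_prod, Set.InjOn.ncard_image, Set.ncard_prod]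
  rintro ⟨q, u⟩ ⟨hq, -⟩ ⟨q', u'⟩ ⟨hq', -⟩ h
  obtain ⟨rfl, rfl⟩ := List.append_inj h ((hA q hq).trans (hA q' hq').symm)
  rfl

lemma setOf_length_succ_count (c : Bool) (n m : ℕ) :
    {l : List Bool | l.length = n + 1 ∧ l.count c = m} =
      List.cons c '' {l | l.length = n ∧ l.count c + 1 = m} ∪
        List.cons (!c) '' {l | l.length = n ∧ l.count c = m} := by
  ext l
  cases l with
  | nil => simp
  | cons d l => cases d <;> cases c <;> simp

lemma ncard_setOf_length_count (c : Bool) (n m : ℕ) :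
    {l : List Bool | l.length = n ∧ l.count c = m}.ncard = n.choose m := by
  induction n generalizing m with
  | zero =>
    cases m with
    | zero => exact Set.ncard_eq_one.2 ⟨[], by ext l; simp +contextual [List.length_eq_zero_iff]⟩
    | succ m =>
      have hempty : {l : List Bool | l.length = 0 ∧ l.count c = m + 1} = ∅ :=
        Set.eq_empty_of_forall_notMem fun l ⟨h0, hc⟩ => by simp [List.length_eq_zero_iff.1 h0] at hc
      rw [hempty, Set.ncard_empty, Nat.choose_zero_succ]
  | succ n ih =>
    have hfin : ∀ P : List Bool → Prop, {l : List Bool | l.length = n ∧ P l}.Finite :=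
      fun P => (List.finite_length_eq Bool n).subset fun _ hl => hl.1
    have hdisj : Disjoint (List.cons c '' {l | l.length = n ∧ l.count c + 1 = m})
        (List.cons (!c) '' {l | l.length = n ∧ l.count c = m}) :=
      Set.disjoint_left.2 fun _ ⟨_, _, h⟩ ⟨_, _, h'⟩ => by cases c <;> simp [← h'] at h
    rw [setOf_length_succ_count, Set.ncard_union_eq hdisj ((hfin _).image _) ((hfin _).image _),
      Set.ncard_image_of_injective _ List.cons_injective,
      Set.ncard_image_of_injective _ List.cons_injective, ih]
    cases m with
    | zero => simp
    | succ m => simp [ih, Nat.choose_succ_succ]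

theorem mul_one_add_sub_mul_eq {R : Type*} [Ring R] {F G H J K : R}
    (hG : G = F + F * J * G) (hH : H = F + F * K * H) (hunit : IsUnit (1 - F * K)) :
    H * (1 + (J - K) * G) = G := by
  refine hunit.mul_left_cancel ?_
  have hFH : (1 - F * K) * H = F := by
    rw [sub_mul, one_mul]
    exact sub_eq_of_eq_add hH
  calc (1 - F * K) * (H * (1 + (J - K) * G))
      = F * (1 + (J - K) * G) := by rw [← mul_assoc, hFH]
    _ = (F + F * J * G) - F * K * G := by noncomm_ring
    _ = (1 - F * K) * G := by rw [← hG]; noncomm_ring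

theorem Matrix.isUnit_one_sub_mul_of_constantCoeff {σ n R : Type*} [Fintype n] [DecidableEq n]
    [CommRing R] {A B : Matrix n n (MvPowerSeries σ R)}
    (hA : ∀ i j, MvPowerSeries.constantCoeff (A i j) = 0) : IsUnit (1 - A * B) := by
  have hA0 : (MvPowerSeries.constantCoeff (σ := σ) (R := R)).mapMatrix A = 0 := by
    ext i j
    exact hA i j
  rw [Matrix.isUnit_iff_isUnit_det, MvPowerSeries.isUnit_iff_constantCoeff, RingHom.map_det,
    map_sub, map_one, map_mul, hA0, zero_mul, sub_zero, Matrix.det_one]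
  exact isUnit_one

def offDiag {R : Type*} [Zero R] (u v : R) : Matrix Bool Bool R :=
  Matrix.of fun a b => if a = b then 0 else cond a u v

lemma offDiag_sub_offDiag {R : Type*} [AddGroup R] (u v u' v' : R) :
    offDiag u v - offDiag u' v' = offDiag (u - u') (v - v') := by
  ext a b
  cases a <;> cases b <;> simp [offDiag]

namespace LatticePath

def OnLine (α β : ℕ) (q : LatticePath) : Prop :=
  α * q.count false = β * q.count true

def IsBounce (α β : ℕ) (c : Bool) (p : LatticePath) (i : ℕ) : Prop :=
  p[i]? = some c ∧ p[i + 1]? = some (!c) ∧ OnLine α β (p.take (i + 1))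

noncomputable def bounces (α β : ℕ) (c : Bool) (p : LatticePath) : ℕ :=
  {i | IsBounce α β c p i}.ncard

variable {α β : ℕ} {c c' : Bool} {p q u : LatticePath} {i j k : ℕ}

lemma leftBounces_eq_bounces : leftBounces α β p = bounces α β true p := rfl

lemma rightBounces_eq_bounces : rightBounces α β p = bounces α β false p := rfl

lemma bounceFree_iff : BounceFree α β p ↔ ∀ c i, ¬ IsBounce α β c p i := by
  rw [Bool.forall_bool, BounceFree]
  exact and_comm

lemma length_eq_of_inL (h : InL α β k p) : p.length = (α + β) * k := by
  rw [← List.count_true_add_count_false, h.1, h.2, add_mul]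

lemma onLine_of_inL (h : InL α β k p) : OnLine α β p := by
  rw [OnLine, h.1, h.2, mul_left_comm]

lemma exists_inL_of_onLine (hα : 0 < α) (hcop : α.Coprime β) (h : OnLine α β q) :
    ∃ j, InL α β j q := by
  obtain ⟨j, hj⟩ : α ∣ q.count true := hcop.dvd_of_dvd_mul_left ⟨_, h.symm⟩
  refine ⟨j, hj, Nat.eq_of_mul_eq_mul_left hα ?_⟩
  rw [h, hj, mul_left_comm]

lemma inL_append_iff (hjk : j ≤ k) (hq : InL α β j q) :
    InL α β k (q ++ u) ↔ InL α β (k - j) u := by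
  have hα : α * j ≤ α * k := Nat.mul_le_mul_left α hjk
  have hβ : β * j ≤ β * k := Nat.mul_le_mul_left β hjk
  simp only [InL, List.count_append, hq.1, hq.2, Nat.mul_sub]
  omega

lemma onLine_append_iff (hq : OnLine α β q) : OnLine α β (q ++ u) ↔ OnLine α β u := by
  rw [OnLine, OnLine, List.count_append, List.count_append, mul_add, mul_add, hq]
  exact Nat.add_left_cancel_iff

lemma IsBounce.succ_lt_length (h : IsBounce α β c p i) : i + 1 < p.length := by
  by_contra h'
  have := h.2.1
  rw [List.getElem?_eq_none (by omega)] at this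
  simp at this

lemma finite_setOf_isBounce : {i | IsBounce α β c p i}.Finite :=
  (Set.finite_Iio p.length).subset fun _ hi => by
    have := IsBounce.succ_lt_length hi
    simp only [Set.mem_Iio]
    omega

lemma isBounce_append_iff (hq : OnLine α β q) :
    IsBounce α β c (q ++ u) i ↔ IsBounce α β c q i
      ∨ (i + 1 = q.length ∧ q.getLast? = some c ∧ u.head? = some (!c))
      ∨ (q.length ≤ i ∧ IsBounce α β c u (i - q.length)) := by
  rcases lt_trichotomy (i + 1) q.length with h | h | h
  · have hnot : ¬ (i + 1 = q.length) ∧ ¬ (q.length ≤ i) := by omega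
    simp only [IsBounce, List.getElem?_append_left (show i < q.length by omega),
      List.getElem?_append_left h, List.take_append_of_le_length h.le, hnot, false_and,
      or_false]
  · have hbq : ¬ IsBounce α β c q i := fun hb => by have := hb.succ_lt_length; omega
    have e1 : (q ++ u)[i]? = q.getLast? := by
      rw [List.getElem?_append_left (by omega), List.getLast?_eq_getElem?, ← h, Nat.add_sub_cancel]
    have e2 : (q ++ u)[i + 1]? = u.head? := by
      rw [List.getElem?_append_right h.ge, h, Nat.sub_self, List.head?_eq_getElem?]
    have e3 : (q ++ u).take (i + 1) = q := by rw [h, List.take_left]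
    have hnot : ¬ (q.length ≤ i) := by omega
    simp only [hbq, hnot, h, true_and, false_and, false_or, or_false]
    rw [IsBounce, e1, e2, e3]
    exact and_congr_right fun _ => and_iff_left hq
  · have hbq : ¬ IsBounce α β c q i := fun hb => by have := hb.succ_lt_length; omega
    have hle : q.length ≤ i := by omega
    have e1 : (q ++ u)[i]? = u[i - q.length]? := List.getElem?_append_right hle
    have e2 : (q ++ u)[i + 1]? = u[i - q.length + 1]? := by
      rw [List.getElem?_append_right (by omega), Nat.sub_add_comm hle]
    have e3 : (q ++ u).take (i + 1) = q ++ u.take (i - q.length + 1) := by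
      rw [List.take_append, List.take_of_length_le (by omega), Nat.sub_add_comm hle]
    have hnot : ¬ (i + 1 = q.length) := by omega
    simp only [hbq, hnot, hle, false_and, true_and, false_or]
    rw [IsBounce, IsBounce, e1, e2, e3, onLine_append_iff hq]

def abPaths (α β k : ℕ) (a b : Bool) : Set LatticePath :=
  {p | InL α β k p ∧ FirstStep p a ∧ LastStep p b}

def bounceFreePaths (α β k : ℕ) (a b : Bool) : Set LatticePath :=
  {p | InL α β k p ∧ BounceFree α β p ∧ FirstStep p a ∧ LastStep p b}

variable {a b : Bool}

lemma bounceFreePaths_subset : bounceFreePaths α β k a b ⊆ abPaths α β k a b :=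
  fun _ hp => ⟨hp.1, hp.2.2⟩

lemma finite_abPaths : (abPaths α β k a b).Finite :=
  (List.finite_length_eq Bool ((α + β) * k)).subset fun _ hp => length_eq_of_inL hp.1

lemma ne_nil_of_firstStep (h : FirstStep p a) : p ≠ [] := by
  rintro rfl
  simp [FirstStep] at h

lemma ne_nil_of_lastStep (h : LastStep p b) : p ≠ [] := by
  rintro rfl
  simp [LastStep] at h

lemma leftBounces_eq_zero_of_bounceFree (h : BounceFree α β p) : leftBounces α β p = 0 := by
  simp [leftBounces, h.1]

lemma rightBounces_eq_zero_of_bounceFree (h : BounceFree α β p) : rightBounces α β p = 0 := by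
  simp [rightBounces, h.2]

lemma append_mem_abPaths (hjk : j ≤ k) (hq : q ∈ abPaths α β j a c)
    (hu : u ∈ abPaths α β (k - j) c' b) : q ++ u ∈ abPaths α β k a b := by
  refine ⟨(inL_append_iff hjk hq.1).2 hu.1, ?_, ?_⟩
  · rw [FirstStep, List.head?_append, hq.2.1]
    rfl
  · rw [LastStep, List.getLast?_append, hu.2.2]
    rfl

section FirstBounce

variable (hq : q ∈ bounceFreePaths α β j a c) (hu : FirstStep u (!c))
include hq hu

lemma isBounce_append_iff_of_mem_bounceFreePaths :
    IsBounce α β c' (q ++ u) i ↔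
      (i + 1 = q.length ∧ c' = c) ∨ (q.length ≤ i ∧ IsBounce α β c' u (i - q.length)) := by
  have hlast : q.getLast? = some c := hq.2.2.2
  have hhead : u.head? = some (!c) := hu
  rw [isBounce_append_iff (onLine_of_inL hq.1), hlast, hhead]
  simp only [bounceFree_iff.mp hq.2.1 c' i, false_or, Option.some.injEq]
  cases c <;> cases c' <;> simp

lemma bounces_append : bounces α β c' (q ++ u) = bounces α β c' u + if c' = c then 1 else 0 := by
  have hq0 := List.length_pos_iff.2 (ne_nil_of_lastStep hq.2.2.2)
  have hset : {i | IsBounce α β c' (q ++ u) i} =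
      (q.length + ·) '' {i | IsBounce α β c' u i} ∪ {i | i + 1 = q.length ∧ c' = c} := by
    ext i
    simp only [Set.mem_ofPred_eq, Set.mem_union, Set.mem_image,
      isBounce_append_iff_of_mem_bounceFreePaths hq hu]
    constructor
    · rintro (h | ⟨hle, hb⟩)
      · exact Or.inr h
      · exact Or.inl ⟨i - q.length, hb, by omega⟩
    · rintro (⟨x, hx, rfl⟩ | h)
      · exact Or.inr ⟨by omega, by simpa using hx⟩
      · exact Or.inl h
  have hdisj : Disjoint ((q.length + ·) '' {i | IsBounce α β c' u i})
      {i | i + 1 = q.length ∧ c' = c} :=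
    Set.disjoint_left.2 (by rintro _ ⟨x, -, rfl⟩ ⟨h, -⟩; dsimp only at h; omega)
  have hfin : {i | i + 1 = q.length ∧ c' = c}.Finite :=
    (Set.finite_singleton (q.length - 1)).subset fun i hi => by
      simp only [Set.mem_ofPred_eq] at hi
      simp only [Set.mem_singleton_iff]
      omega
  rw [bounces, hset, Set.ncard_union_eq hdisj (finite_setOf_isBounce.image _) hfin,
    Set.ncard_image_of_injective _ (add_right_injective _)]
  congr 1
  split_ifs with hc
  · rw [Set.ncard_eq_one]
    refine ⟨q.length - 1, Set.ext fun i => ?_⟩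
    simp only [hc, and_true, Set.mem_ofPred_eq, Set.mem_singleton_iff]
    omega
  · simp [hc]

lemma leftBounces_append : leftBounces α β (q ++ u) = leftBounces α β u + c.toNat := by
  rw [leftBounces_eq_bounces, leftBounces_eq_bounces, bounces_append hq hu]
  cases c <;> rfl

lemma rightBounces_append : rightBounces α β (q ++ u) = rightBounces α β u + (!c).toNat := by
  rw [rightBounces_eq_bounces, rightBounces_eq_bounces, bounces_append hq hu]
  cases c <;> rfl

lemma not_bounceFree_append : ¬ BounceFree α β (q ++ u) := fun h =>
  bounceFree_iff.mp h c (q.length - 1) <|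
    (isBounce_append_iff_of_mem_bounceFreePaths hq hu).2 <|
      Or.inl ⟨by have := List.length_pos_iff.2 (ne_nil_of_lastStep hq.2.2.2); omega, rfl⟩

end FirstBounce

lemma exists_append_of_not_bounceFree (hα : 0 < α) (hcop : α.Coprime β)
    (hp : p ∈ abPaths α β k a b) (hnb : ¬ BounceFree α β p) :
    ∃ j ∈ Finset.Ico 1 k, ∃ c, ∃ q ∈ bounceFreePaths α β j a c,
      ∃ u ∈ abPaths α β (k - j) (!c) b, p = q ++ u := by
  classical
  have hex : ∃ i c, IsBounce α β c p i := by
    by_contra! h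
    exact hnb (bounceFree_iff.2 fun c i => h i c)
  obtain ⟨c, hc⟩ := Nat.find_spec hex
  set i := Nat.find hex
  have hlt := hc.succ_lt_length
  set q := p.take (i + 1)
  set u := p.drop (i + 1)
  have hpqu : p = q ++ u := (List.take_append_drop _ _).symm
  have hqlen : q.length = i + 1 := List.length_take_of_le hlt.le
  obtain ⟨j, hj⟩ : ∃ j, InL α β j q := exists_inL_of_onLine hα hcop hc.2.2
  have hjlen := length_eq_of_inL hj
  have hplen := length_eq_of_inL hp.1
  have hj1 : 1 ≤ j := Nat.one_le_iff_ne_zero.2 fun h0 => by rw [h0, mul_zero] at hjlen; omega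
  have hjk : j < k := Nat.lt_of_mul_lt_mul_left (a := α + β) (by omega)
  refine ⟨j, Finset.mem_Ico.2 ⟨hj1, hjk⟩, c, q, ⟨hj, ?_, ?_, ?_⟩, u,
    ⟨(inL_append_iff hjk.le hj).1 (hpqu ▸ hp.1), ?_, ?_⟩, hpqu⟩
  · refine bounceFree_iff.2 fun c' i' hb => Nat.find_min hex (?_ : i' < i) ⟨c', ?_⟩
    · have := hb.succ_lt_length
      omega
    · rw [hpqu]
      exact (isBounce_append_iff hc.2.2).2 (Or.inl hb)
  · rw [FirstStep, List.head?_take, if_neg (by omega)]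
    exact hp.2.1
  · rw [LastStep, List.getLast?_eq_getElem?, hqlen, Nat.add_sub_cancel,
      List.getElem?_take_of_lt (by omega)]
    exact hc.1
  · rw [FirstStep, List.head?_drop]
    exact hc.2.1
  · have hu : u ≠ [] := by simpa [u] using hlt
    rw [LastStep, ← List.getLast?_append_of_ne_nil q hu, ← hpqu]
    exact hp.2.2

lemma eq_of_append_eq_append (hαβ : 0 < α + β) {a' : Bool} {q' u' : LatticePath} {j' : ℕ}
    (hq : q ∈ bounceFreePaths α β j a c) (hu : FirstStep u (!c))
    (hq' : q' ∈ bounceFreePaths α β j' a' c') (hu' : FirstStep u' (!c'))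
    (h : q ++ u = q' ++ u') : j = j' ∧ c = c' := by
  have hq0 := List.length_pos_iff.2 (ne_nil_of_lastStep hq.2.2.2)
  have hq0' := List.length_pos_iff.2 (ne_nil_of_lastStep hq'.2.2.2)
  have hb : IsBounce α β c (q' ++ u') (q.length - 1) :=
    h ▸ (isBounce_append_iff_of_mem_bounceFreePaths hq hu).2 (Or.inl ⟨by omega, rfl⟩)
  have hb' : IsBounce α β c' (q ++ u) (q'.length - 1) :=
    h ▸ (isBounce_append_iff_of_mem_bounceFreePaths hq' hu').2 (Or.inl ⟨by omega, rfl⟩)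
  rw [isBounce_append_iff_of_mem_bounceFreePaths hq' hu'] at hb
  rw [isBounce_append_iff_of_mem_bounceFreePaths hq hu] at hb'
  have hlen : q.length = q'.length ∧ c = c' := by
    rcases hb with ⟨h1, h2⟩ | ⟨h1, -⟩
    · exact ⟨by omega, h2⟩
    · rcases hb' with ⟨h3, -⟩ | ⟨h3, -⟩ <;> omega
  refine ⟨Nat.eq_of_mul_eq_mul_left hαβ ?_, hlen.2⟩
  rw [← length_eq_of_inL hq.1, ← length_eq_of_inL hq'.1, hlen.1]

lemma setOf_abPaths_eq (hα : 0 < α) (hcop : α.Coprime β) (P : ℕ → ℕ → Prop) :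
    {p | p ∈ abPaths α β k a b ∧ P (leftBounces α β p) (rightBounces α β p)} =
      {p | p ∈ bounceFreePaths α β k a b ∧ P 0 0} ∪
        ⋃ x ∈ (↑(Finset.Ico 1 k ×ˢ (Finset.univ : Finset Bool)) : Set (ℕ × Bool)),
          Set.image2 (· ++ ·) (bounceFreePaths α β x.1 a x.2)
            {u | u ∈ abPaths α β (k - x.1) (!x.2) b ∧
              P (leftBounces α β u + x.2.toNat) (rightBounces α β u + (!x.2).toNat)} := by
  ext p
  simp only [Set.mem_union, Set.mem_ofPred_eq, Set.mem_iUnion, Set.mem_image2, Finset.coe_product,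
    Set.mem_prod, Finset.mem_coe, Finset.coe_univ, Set.mem_univ, and_true, exists_prop,
    Prod.exists]
  constructor
  · rintro ⟨hp, hP⟩
    by_cases hbf : BounceFree α β p
    · left
      refine ⟨⟨hp.1, hbf, hp.2⟩, ?_⟩
      rwa [leftBounces_eq_zero_of_bounceFree hbf, rightBounces_eq_zero_of_bounceFree hbf] at hP
    · right
      obtain ⟨j, hj, c, q, hq, u, hu, rfl⟩ := exists_append_of_not_bounceFree hα hcop hp hbf
      refine ⟨j, c, hj, q, hq, u, ⟨hu, ?_⟩, rfl⟩
      rwa [leftBounces_append hq hu.2.1, rightBounces_append hq hu.2.1] at hP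
  · rintro (⟨hp, hP⟩ | ⟨j, c, hj, q, hq, u, ⟨hu, hP⟩, rfl⟩)
    · refine ⟨bounceFreePaths_subset hp, ?_⟩
      rwa [leftBounces_eq_zero_of_bounceFree hp.2.1, rightBounces_eq_zero_of_bounceFree hp.2.1]
    · refine ⟨append_mem_abPaths (Finset.mem_Ico.1 hj).2.le (bounceFreePaths_subset hq) hu, ?_⟩
      rwa [leftBounces_append hq hu.2.1, rightBounces_append hq hu.2.1]

theorem ncard_setOf_abPaths (hα : 0 < α) (hcop : α.Coprime β) (P : ℕ → ℕ → Prop) :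
    {p | p ∈ abPaths α β k a b ∧ P (leftBounces α β p) (rightBounces α β p)}.ncard =
      {p | p ∈ bounceFreePaths α β k a b ∧ P 0 0}.ncard +
        ∑ j ∈ Finset.Ico 1 k, ∑ c : Bool, (bounceFreePaths α β j a c).ncard *
          {u | u ∈ abPaths α β (k - j) (!c) b ∧
            P (leftBounces α β u + c.toNat) (rightBounces α β u + (!c).toNat)}.ncard := by
  set t := Finset.Ico 1 k ×ˢ (Finset.univ : Finset Bool)
  set T := fun x : ℕ × Bool => Set.image2 (· ++ ·) (bounceFreePaths α β x.1 a x.2)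
    {u | u ∈ abPaths α β (k - x.1) (!x.2) b ∧
      P (leftBounces α β u + x.2.toNat) (rightBounces α β u + (!x.2).toNat)}
  have hT : ∀ x ∈ (t : Set (ℕ × Bool)), T x ⊆ abPaths α β k a b := by
    rintro ⟨j, c⟩ hx _ ⟨q, hq, u, hu, rfl⟩
    simp only [t, Finset.coe_product, Set.mem_prod, Finset.mem_coe, Finset.mem_Ico] at hx
    exact append_mem_abPaths hx.1.2.le (bounceFreePaths_subset hq) hu.1
  have hdisj : Disjoint {p | p ∈ bounceFreePaths α β k a b ∧ P 0 0} (⋃ x ∈ (t : Set _), T x) := by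
    refine Set.disjoint_left.2 fun p ⟨⟨_, hbf, _⟩, _⟩ hmem => ?_
    obtain ⟨x, -, q, hq, u, hu, rfl⟩ := Set.mem_iUnion₂.1 hmem
    exact not_bounceFree_append hq hu.1.2.1 hbf
  have hpd : (t : Set (ℕ × Bool)).PairwiseDisjoint T := by
    rintro ⟨j, c⟩ - ⟨j', c'⟩ - hne
    refine Set.disjoint_left.2 ?_
    rintro _ ⟨q, hq, u, hu, rfl⟩ ⟨q', hq', u', hu', h⟩
    obtain ⟨rfl, rfl⟩ := eq_of_append_eq_append (by omega) hq hu.1.2.1 hq' hu'.1.2.1 h.symm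
    exact hne rfl
  rw [setOf_abPaths_eq hα hcop P, Set.ncard_union_eq hdisj
      (finite_abPaths.subset fun _ hp => bounceFreePaths_subset hp.1)
      (finite_abPaths.subset (Set.iUnion₂_subset hT)),
    Set.Finite.ncard_biUnion t.finite_toSet (fun x hx => finite_abPaths.subset (hT x hx)) hpd,
    finsum_mem_coe_finset, Finset.sum_product]
  exact congrArg _ (Finset.sum_congr rfl fun j _ => Finset.sum_congr rfl fun c _ =>
    ncard_image2_append fun q hq => length_eq_of_inL hq.1)

lemma abPaths_eq_image (hα : 0 < α) (hβ : 0 < β) (hk : 0 < k) :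
    abPaths α β k a b = (fun l => a :: (l ++ [b])) ''
      {l | l.count true + a.toNat + b.toNat = α * k ∧
        l.count false + (!a).toNat + (!b).toNat = β * k} := by
  ext p
  constructor
  · rintro ⟨hcount, hfirst, hlast⟩
    have hlen := length_eq_of_inL hcount
    have h2 : 2 ≤ (α + β) * k := le_trans (by omega) (Nat.mul_le_mul_left _ hk)
    obtain ⟨a', t, rfl⟩ := List.exists_cons_of_ne_nil (ne_nil_of_firstStep hfirst)
    obtain rfl : a' = a := by simpa [FirstStep] using hfirst
    obtain rfl | ⟨l, b', rfl⟩ := List.eq_nil_or_concat t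
    · simp at hlen
      omega
    rw [LastStep, List.concat_eq_append, ← List.cons_append, List.getLast?_concat] at hlast
    obtain rfl : b' = b := by simpa using hlast
    refine ⟨l, ?_, by simp⟩
    obtain ⟨h1, h2⟩ := hcount
    cases a' <;> cases b' <;> simp at h1 h2 ⊢ <;> omega
  · rintro ⟨l, ⟨h1, h2⟩, rfl⟩
    refine ⟨?_, by simp [FirstStep], ?_⟩
    · constructor <;> cases a <;> cases b <;> simp at h1 h2 ⊢ <;> omega
    · simp only [LastStep]
      rw [← List.cons_append, List.getLast?_concat]

lemma ncard_abPaths (hα : 0 < α) (hβ : 0 < β) (hk : 0 < k) (c : Bool) (m : ℕ)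
    (hmid : ∀ l : List Bool, (l.count true + a.toNat + b.toNat = α * k ∧
        l.count false + (!a).toNat + (!b).toNat = β * k) ↔
      (l.length = (α + β) * k - 2 ∧ l.count c = m)) :
    (abPaths α β k a b).ncard = ((α + β) * k - 2).choose m := by
  rw [abPaths_eq_image hα hβ hk, Set.ncard_image_of_injective _
    fun _ _ h => List.append_left_injective [b] (List.cons_injective h),
    ← ncard_setOf_length_count c]
  exact congrArg Set.ncard (Set.ext hmid)

end LatticePath

open LatticePath

section PathSeries

variable {α β : ℕ}

noncomputable def pathGF (α β : ℕ) (a b : Bool) : PowerSeries ℚ :=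
  gfOf fun k => abPaths α β k a b

noncomputable def bounceFreeGF (α β : ℕ) (a b : Bool) : PowerSeries ℚ :=
  gfOf fun k => bounceFreePaths α β k a b

lemma coeff_gfOf (S : ℕ → Set LatticePath) (k : ℕ) :
    PowerSeries.coeff k (gfOf S) = if k = 0 then 0 else ((S k).ncard : ℚ) :=
  PowerSeries.coeff_mk _ _

lemma gfOf_empty : gfOf (fun _ => ∅) = 0 := by
  ext k
  simp [coeff_gfOf]

lemma coeff_gfOf_mul_gfOf (S T : ℕ → Set LatticePath) (k : ℕ) :
    PowerSeries.coeff k (gfOf S * gfOf T) =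
      ∑ j ∈ Finset.Ico 1 k, ((S j).ncard : ℚ) * (T (k - j)).ncard := by
  have hsub : Finset.Ico 1 k ⊆ Finset.range (k + 1) := fun j hj => by
    simp only [Finset.mem_Ico, Finset.mem_range] at hj ⊢
    omega
  rw [PowerSeries.coeff_mul, Finset.Nat.sum_antidiagonal_eq_sum_range_succ_mk,
    ← Finset.sum_subset hsub fun j hj hj' => ?_]
  · refine Finset.sum_congr rfl fun j hj => ?_
    simp only [Finset.mem_Ico] at hj
    rw [coeff_gfOf, coeff_gfOf, if_neg (by omega), if_neg (by omega)]
  · simp only [Finset.mem_Ico, Finset.mem_range] at hj hj'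
    rw [coeff_gfOf, coeff_gfOf]
    dsimp only
    rcases Nat.eq_zero_or_pos j with rfl | hj0
    · rw [if_pos rfl, zero_mul]
    · rw [show k - j = 0 by omega, if_pos rfl, mul_zero]

theorem gfOf_setOf_abPaths (hα : 0 < α) (hcop : α.Coprime β) (P : ℕ → ℕ → Prop) (a b : Bool) :
    gfOf (fun k => {p | p ∈ abPaths α β k a b ∧ P (leftBounces α β p) (rightBounces α β p)}) =
      gfOf (fun k => {p | p ∈ bounceFreePaths α β k a b ∧ P 0 0}) +
        ∑ c : Bool, bounceFreeGF α β a c * gfOf (fun m => {u | u ∈ abPaths α β m (!c) b ∧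
          P (leftBounces α β u + c.toNat) (rightBounces α β u + (!c).toNat)}) := by
  ext k
  simp only [map_add, map_sum, bounceFreeGF, coeff_gfOf_mul_gfOf, coeff_gfOf]
  split_ifs with hk
  · simp [hk]
  · rw [ncard_setOf_abPaths hα hcop, Finset.sum_comm]
    push_cast
    rfl

theorem pathGF_eq (hα : 0 < α) (hcop : α.Coprime β) (a b : Bool) :
    pathGF α β a b = bounceFreeGF α β a b + bounceFreeGF α β a true * pathGF α β false b +
      bounceFreeGF α β a false * pathGF α β true b := by
  have h := gfOf_setOf_abPaths hα hcop (fun _ _ => True) a b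
  simp only [and_true, Set.ofPred_mem_eq, Fintype.sum_bool, Bool.not_true, Bool.not_false] at h
  rw [pathGF, h, add_assoc]
  rfl

lemma pathGF_eq_mk (hα : 0 < α) (hβ : 0 < β) {a b : Bool} (c : Bool) (m : ℕ → ℕ)
    (hmid : ∀ k, 0 < k → ∀ l : List Bool, (l.count true + a.toNat + b.toNat = α * k ∧
        l.count false + (!a).toNat + (!b).toNat = β * k) ↔
      (l.length = (α + β) * k - 2 ∧ l.count c = m k)) :
    pathGF α β a b = PowerSeries.mk fun k =>
      if k = 0 then 0 else ((((α + β) * k - 2).choose (m k) : ℕ) : ℚ) := by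
  ext k
  rw [pathGF, coeff_gfOf, PowerSeries.coeff_mk]
  split_ifs with hk
  · rfl
  · rw [ncard_abPaths hα hβ (Nat.pos_of_ne_zero hk) c (m k) (hmid k (Nat.pos_of_ne_zero hk))]

theorem pathGF_eq_binomialSeries (hα : 0 < α) (hβ : 0 < β) :
    pathGF α β true false = genSer α β ∧ pathGF α β false true = genSer α β ∧
      pathGF α β true true = geeSer α β ∧ pathGF α β false false = gnnSer α β := by
  -- EE-paths are counted by their N-steps, which matches `geeSer` even when `α * k = 1`.
  refine ⟨pathGF_eq_mk hα hβ true _ ?_, pathGF_eq_mk hα hβ true _ ?_,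
    pathGF_eq_mk hα hβ false _ ?_, pathGF_eq_mk hα hβ true _ ?_⟩ <;>
  · intro k hk l
    have := l.count_true_add_count_false
    have := Nat.mul_pos hα hk
    have := Nat.mul_pos hβ hk
    simp only [Bool.toNat_true, Bool.toNat_false, Bool.not_true, Bool.not_false, add_mul]
    omega

end PathSeries

section ThreeVariables

noncomputable def expXST (k l r : ℕ) : Fin 3 →₀ ℕ := Finsupp.equivFunOnFinite.symm ![k, l, r]

@[simp] lemma expXST_apply_zero (k l r : ℕ) : expXST k l r 0 = k := rfl
@[simp] lemma expXST_apply_one (k l r : ℕ) : expXST k l r 1 = l := rfl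
@[simp] lemma expXST_apply_two (k l r : ℕ) : expXST k l r 2 = r := rfl

lemma eq_expXST_iff {d : Fin 3 →₀ ℕ} {k l r : ℕ} :
    d = expXST k l r ↔ d 0 = k ∧ d 1 = l ∧ d 2 = r := by
  refine ⟨by rintro rfl; simp, fun ⟨h0, h1, h2⟩ => Finsupp.ext fun i => ?_⟩
  fin_cases i <;> assumption

noncomputable def coeffST (l r : ℕ) (A : MvPowerSeries (Fin 3) ℚ) : PowerSeries ℚ :=
  PowerSeries.mk fun k => MvPowerSeries.coeff (expXST k l r) A

variable {l r : ℕ}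

lemma coeff_coeffST (k : ℕ) (A : MvPowerSeries (Fin 3) ℚ) :
    PowerSeries.coeff k (coeffST l r A) = MvPowerSeries.coeff (expXST k l r) A :=
  PowerSeries.coeff_mk _ _

lemma eq_of_coeffST_eq {A B : MvPowerSeries (Fin 3) ℚ}
    (h : ∀ l r, coeffST l r A = coeffST l r B) : A = B := by
  ext d
  have := congrArg (PowerSeries.coeff (d 0)) (h (d 1) (d 2))
  rwa [coeff_coeffST, coeff_coeffST, ← eq_expXST_iff.2 ⟨rfl, rfl, rfl⟩] at this

lemma coeffST_add (A B : MvPowerSeries (Fin 3) ℚ) :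
    coeffST l r (A + B) = coeffST l r A + coeffST l r B := by
  ext k
  simp [coeff_coeffST]

lemma coeff_toMv (φ : PowerSeries ℚ) (d : Fin 3 →₀ ℕ) :
    MvPowerSeries.coeff d (toMv φ) = if d 1 = 0 ∧ d 2 = 0 then PowerSeries.coeff (d 0) φ else 0 :=
  rfl

lemma coeffST_toMv (φ : PowerSeries ℚ) :
    coeffST l r (toMv φ) = if l = 0 ∧ r = 0 then φ else 0 := by
  ext k
  rw [coeff_coeffST, coeff_toMv]
  split_ifs <;> simp_all

lemma coeffST_toMv_mul (φ : PowerSeries ℚ) (A : MvPowerSeries (Fin 3) ℚ) :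
    coeffST l r (toMv φ * A) = φ * coeffST l r A := by
  classical
  ext k
  set e : ℕ × ℕ → (Fin 3 →₀ ℕ) × (Fin 3 →₀ ℕ) := fun x => (expXST x.1 0 0, expXST x.2 l r)
  have he : Set.InjOn e ↑(Finset.HasAntidiagonal.antidiagonal k) := fun x _ y _ h => by
    have h0 := congrArg (fun z => (z.1 0, z.2 0)) h
    simpa [e, Prod.ext_iff] using h0
  have hsub : (Finset.HasAntidiagonal.antidiagonal k).image e ⊆
      Finset.HasAntidiagonal.antidiagonal (expXST k l r) := by
    intro x hx
    obtain ⟨⟨i, j⟩, hij, rfl⟩ := Finset.mem_image.1 hx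
    rw [Finset.HasAntidiagonal.mem_antidiagonal] at hij ⊢
    exact eq_expXST_iff.2 (by simp [e, hij])
  rw [coeff_coeffST, MvPowerSeries.coeff_mul, PowerSeries.coeff_mul,
    ← Finset.sum_subset hsub fun x hx hnot => ?_, Finset.sum_image he]
  · refine Finset.sum_congr rfl fun x _ => ?_
    simp [e, coeff_toMv, coeff_coeffST]
  · rw [coeff_toMv, if_neg, zero_mul]
    rintro ⟨h1, h2⟩
    have hsum := fun i => congrArg (· i) (Finset.HasAntidiagonal.mem_antidiagonal.1 hx)
    simp only [Finsupp.add_apply] at hsum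
    have hs0 := hsum 0
    have hs1 := hsum 1
    have hs2 := hsum 2
    simp only [expXST_apply_zero, expXST_apply_one, expXST_apply_two] at hs0 hs1 hs2
    refine hnot (Finset.mem_image.2 ⟨(x.1 0, x.2 0), Finset.HasAntidiagonal.mem_antidiagonal.2 hs0,
      Prod.ext (eq_expXST_iff.2 ⟨rfl, h1, h2⟩).symm
        (eq_expXST_iff.2 ⟨rfl, by omega, by omega⟩).symm⟩)

lemma coeffST_sVar_mul (A : MvPowerSeries (Fin 3) ℚ) :
    coeffST (l + 1) r (sVar * A) = coeffST l r A := by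
  ext k
  rw [coeff_coeffST, coeff_coeffST, sVar, MvPowerSeries.X_def, MvPowerSeries.coeff_monomial_mul,
    if_pos (Finsupp.single_le_iff.2 (by simp)), one_mul]
  congr 2
  exact eq_expXST_iff.2 (by simp)

lemma coeffST_zero_sVar_mul (A : MvPowerSeries (Fin 3) ℚ) : coeffST 0 r (sVar * A) = 0 := by
  ext k
  rw [coeff_coeffST, sVar, MvPowerSeries.X_def, MvPowerSeries.coeff_monomial_mul, if_neg]
  · rfl
  · rw [Finsupp.single_le_iff]
    simp

lemma coeffST_tVar_mul (A : MvPowerSeries (Fin 3) ℚ) :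
    coeffST l (r + 1) (tVar * A) = coeffST l r A := by
  ext k
  rw [coeff_coeffST, coeff_coeffST, tVar, MvPowerSeries.X_def, MvPowerSeries.coeff_monomial_mul,
    if_pos (Finsupp.single_le_iff.2 (by simp)), one_mul]
  congr 2
  exact eq_expXST_iff.2 (by simp)

lemma coeffST_zero_tVar_mul (A : MvPowerSeries (Fin 3) ℚ) : coeffST l 0 (tVar * A) = 0 := by
  ext k
  rw [coeff_coeffST, tVar, MvPowerSeries.X_def, MvPowerSeries.coeff_monomial_mul, if_neg]
  · rfl
  · rw [Finsupp.single_le_iff]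
    simp

lemma toMv_add (φ ψ : PowerSeries ℚ) : toMv (φ + ψ) = toMv φ + toMv ψ :=
  eq_of_coeffST_eq fun l r => by
    rw [coeffST_add, coeffST_toMv, coeffST_toMv, coeffST_toMv]
    split_ifs <;> simp

lemma toMv_mul (φ ψ : PowerSeries ℚ) : toMv (φ * ψ) = toMv φ * toMv ψ :=
  eq_of_coeffST_eq fun l r => by
    rw [coeffST_toMv_mul, coeffST_toMv, coeffST_toMv]
    split_ifs <;> simp

lemma coeffST_G3ab (α β : ℕ) (a b : Bool) :
    coeffST l r (G3ab α β a b) = gfOf fun k =>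
      {p | p ∈ abPaths α β k a b ∧ leftBounces α β p = l ∧ rightBounces α β p = r} := by
  ext k
  simp only [coeff_coeffST, coeff_gfOf, abPaths, Set.mem_ofPred_eq, and_assoc]
  rfl

end ThreeVariables

theorem G3ab_eq {α β : ℕ} (hα : 0 < α) (hcop : α.Coprime β) (a b : Bool) :
    G3ab α β a b = toMv (bounceFreeGF α β a b) +
      sVar * (toMv (bounceFreeGF α β a true) * G3ab α β false b) +
      tVar * (toMv (bounceFreeGF α β a false) * G3ab α β true b) := by
  refine eq_of_coeffST_eq fun l r => ?_
  have h := gfOf_setOf_abPaths hα hcop (fun l' r' => l' = l ∧ r' = r) a b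
  simp only [Fintype.sum_bool, Bool.not_true, Bool.not_false, Bool.toNat_true,
    Bool.toNat_false, add_zero] at h
  rw [coeffST_add, coeffST_add, coeffST_G3ab, h, coeffST_toMv, add_assoc]
  rcases l with _ | l <;> rcases r with _ | r <;>
    simp [coeffST_sVar_mul, coeffST_zero_sVar_mul, coeffST_tVar_mul, coeffST_zero_tVar_mul,
      coeffST_toMv_mul, coeffST_G3ab, bounceFreeGF, gfOf_empty]

lemma constantCoeff_toMv_gfOf (S : ℕ → Set LatticePath) :
    MvPowerSeries.constantCoeff (toMv (gfOf S)) = 0 := by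
  rw [← MvPowerSeries.coeff_zero_eq_constantCoeff_apply, coeff_toMv]
  simp [coeff_gfOf]

section Matrices

variable (α β : ℕ)

noncomputable def bounceFreeMatrix : Matrix Bool Bool (MvPowerSeries (Fin 3) ℚ) :=
  Matrix.of fun a b => toMv (bounceFreeGF α β a b)

noncomputable def pathMatrix : Matrix Bool Bool (MvPowerSeries (Fin 3) ℚ) :=
  Matrix.of fun a b => toMv (pathGF α β a b)

noncomputable def bounceMatrix : Matrix Bool Bool (MvPowerSeries (Fin 3) ℚ) :=
  Matrix.of fun a b => G3ab α β a b

variable {α β} (hα : 0 < α) (hcop : α.Coprime β)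
include hα hcop

lemma pathMatrix_eq : pathMatrix α β =
    bounceFreeMatrix α β + bounceFreeMatrix α β * offDiag 1 1 * pathMatrix α β := by
  refine Matrix.ext fun a b => ?_
  simp [Matrix.mul_apply, offDiag, pathMatrix, bounceFreeMatrix]
  rw [pathGF_eq hα hcop, toMv_add, toMv_add, toMv_mul, toMv_mul]
  ring

lemma bounceMatrix_eq : bounceMatrix α β =
    bounceFreeMatrix α β + bounceFreeMatrix α β * offDiag sVar tVar * bounceMatrix α β := by
  refine Matrix.ext fun a b => ?_
  simp [Matrix.mul_apply, offDiag, bounceMatrix, bounceFreeMatrix]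
  rw [G3ab_eq hα hcop]
  ring

theorem bounceMatrix_mul_eq :
    bounceMatrix α β * (1 + offDiag (1 - sVar) (1 - tVar) * pathMatrix α β) = pathMatrix α β := by
  rw [← offDiag_sub_offDiag]
  exact mul_one_add_sub_mul_eq (pathMatrix_eq hα hcop) (bounceMatrix_eq hα hcop)
    (Matrix.isUnit_one_sub_mul_of_constantCoeff fun _ _ => constantCoeff_toMv_gfOf _)

end Matrices

theorem G3ab_mul_eq {α β : ℕ} (hα : 0 < α) (hβ : 0 < β) (hcop : α.Coprime β) (a : Bool) :
    G3ab α β a true * (1 + (1 - sVar) * toMv (genSer α β)) +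
        G3ab α β a false * ((1 - tVar) * toMv (geeSer α β)) = toMv (pathGF α β a true) ∧
      G3ab α β a true * ((1 - sVar) * toMv (gnnSer α β)) +
        G3ab α β a false * (1 + (1 - tVar) * toMv (genSer α β)) = toMv (pathGF α β a false) := by
  obtain ⟨hen, hne, hee, hnn⟩ := pathGF_eq_binomialSeries hα hβ
  have h := congrFun (bounceMatrix_mul_eq hα hcop) a
  have h1 := congrFun h true
  have h2 := congrFun h false
  simp [Matrix.mul_apply, Matrix.one_apply, offDiag, bounceMatrix, pathMatrix, hen, hne, hee,
    hnn] at h1 h2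
  exact ⟨h1, h2⟩

/-- In `ℚ[[x,s,t]]`,
`G_en(x,s,t)·D = g_en + (1−s)·(g_en² − g_ee·g_nn)` and
`G_ne(x,s,t)·D = g_en + (1−t)·(g_en² − g_ee·g_nn)`. -/
theorem statement10 (α β : ℕ) (hα : 0 < α) (hβ : 0 < β) (hcop : Nat.Coprime α β) :
    G3ab α β true false * D3 α β
      = toMv (genSer α β) + (1 - sVar) *
          (toMv (genSer α β) ^ 2 - toMv (geeSer α β) * toMv (gnnSer α β)) ∧
    G3ab α β false true * D3 α β
      = toMv (genSer α β) + (1 - tVar) *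
          (toMv (genSer α β) ^ 2 - toMv (geeSer α β) * toMv (gnnSer α β)) := by
  obtain ⟨hen, hne, hee, hnn⟩ := pathGF_eq_binomialSeries hα hβ
  obtain ⟨hEE, hEN⟩ := G3ab_mul_eq hα hβ hcop true
  obtain ⟨hNE, hNN⟩ := G3ab_mul_eq hα hβ hcop false
  simp only [hen, hne, hee, hnn] at hEE hEN hNE hNN
  unfold D3
  set g := toMv (genSer α β)
  constructor
  · linear_combination (1 + (1 - sVar) * g) * hEN - (1 - sVar) * toMv (gnnSer α β) * hEE
  · linear_combination (1 + (1 - tVar) * g) * hNE - (1 - tVar) * toMv (geeSer α β) * hNN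
end
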